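/- arXiv:1802.06511 — 4 statements merged into one kernel-verified Lean document; each statement's English description precedes it below -/
import Mathlib

section
/- Let G be a perfect graph on n vertices, let c ≥ 2 be an integer, let H be a disjoint union of n cliques each of size c−2, and let G' = G ⊕ H. Then for every integer k < n: G has an odd cycle transversal of size k if and only if G' has a c-colorable vertex set of size |V(G')| − k. -/
/-!
If `G - S` is bipartite, color it with two colors and give each clique of `H` the remaining
`c - 2` colors. Conversely, a `c`-colorable set `T` that misses only `k < n` vertices of `G ⊕ H`
contains one of the `n` cliques of `H` entirely (pigeonhole). Every vertex of `G` in `T` is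
adjacent to that whole clique, so avoids its `c - 2` colors: the at least `n - k` vertices of `G`
in `T` induce a bipartite graph.
-/

/-- `S` is a `c`-colorable vertex set in `G`. -/
def ColSet {V : Type*} (G : SimpleGraph V) (c : ℕ) (S : Finset V) : Prop :=
  (G.induce (S : Set V)).Colorable c

/-- `G` is perfect: every induced subgraph has chromatic number equal to its
clique number, stated via the colorability/clique-free characterization. -/
def IsPerfect {V : Type*} (G : SimpleGraph V) : Prop :=
  ∀ (S : Set V) (c : ℕ), (G.induce S).Colorable c ↔ (G.induce S).CliqueFree (c + 1)

/-- The join of two vertex-disjoint graphs, on the sum type. -/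
def SimpleGraph.join {V W : Type*} (G : SimpleGraph V) (H : SimpleGraph W) :
    SimpleGraph (V ⊕ W) where
  Adj x y :=
    match x, y with
    | .inl a, .inl b => G.Adj a b
    | .inr a, .inr b => H.Adj a b
    | .inl _, .inr _ => True
    | .inr _, .inl _ => True
  symm := ⟨by rintro (a | a) (b | b) h <;> simp_all <;> exact h.symm⟩
  loopless := ⟨by
    rintro (a | a) h
    · exact G.irrefl h
    · exact H.irrefl h⟩

/-- The disjoint union of `n` cliques, each of size `m`. -/
def cliquesGraph (n m : ℕ) : SimpleGraph (Fin n × Fin m) where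
  Adj x y := x.1 = y.1 ∧ x ≠ y
  symm := ⟨by rintro x y ⟨h1, h2⟩; exact ⟨h1.symm, h2.symm⟩⟩
  loopless := ⟨by rintro x ⟨h1, h2⟩; exact h2 rfl⟩

open Finset SimpleGraph

theorem Finset.exists_forall_mk_mem_of_card_lt {α β : Type*} [Fintype α] [Fintype β]
    (B : Finset (α × β)) (hB : Fintype.card α * Fintype.card β < #B + Fintype.card α) :
    ∃ a, ∀ b, (a, b) ∈ B := by
  classical
  by_contra! hmiss
  choose f hf using hmiss
  have hsub : univ.image (fun a => (a, f a)) ⊆ Bᶜ := by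
    simpa [subset_iff] using hf
  have hcard := card_le_card hsub
  have hB := B.card_le_univ
  rw [card_image_of_injective _ fun a b h => congrArg Prod.fst h, card_univ, card_compl,
    Fintype.card_prod] at hcard
  rw [Fintype.card_prod] at hB
  omega

namespace SimpleGraph

variable {V W : Type*} {G : SimpleGraph V} {H : SimpleGraph W}

theorem Colorable.induce_of_forall_adj_isClique {s A : Set V} {K : Finset V} {c : ℕ}
    (hs : (G.induce s).Colorable c) (hK : G.IsClique (K : Set V)) (hKs : (K : Set V) ⊆ s)
    (hAs : A ⊆ s) (hAK : ∀ a ∈ A, ∀ v ∈ K, G.Adj a v) :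
    (G.induce A).Colorable (c - #K) := by
  classical
  obtain ⟨C⟩ := hs
  have hC {a b : V} (ha : a ∈ s) (hb : b ∈ s) (hab : G.Adj a b) :
      C ⟨a, ha⟩ ≠ C ⟨b, hb⟩ :=
    C.valid (v := ⟨a, ha⟩) (w := ⟨b, hb⟩) hab
  set colorsK := K.attach.image fun v : K => C ⟨v, hKs v.2⟩
  have hcolorsK : #colorsK = #K := by
    rw [card_image_of_injective, card_attach]
    intro v w hvw
    by_contra hne
    exact hC _ _ (hK v.2 w.2 fun h => hne (Subtype.ext h)) hvw
  have hfree (a : V) (ha : a ∈ A) : C ⟨a, hAs ha⟩ ∉ colorsK := by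
    simp only [colorsK, mem_image, mem_attach, true_and, not_exists]
    exact fun v hv => hC _ _ (hAK a ha v v.2).symm hv
  let D : (G.induce A).Coloring {x // x ∉ colorsK} :=
    Coloring.mk (fun a => ⟨C ⟨a, hAs a.2⟩, hfree a a.2⟩) fun hab h =>
      hC _ _ hab (congrArg Subtype.val h)
  simpa [Fintype.card_subtype_compl, hcolorsK] using D.colorable

theorem Colorable.join_induce_disjSum {s : Finset V} {t : Finset W} {a b : ℕ}
    (hs : (G.induce s).Colorable a) (ht : (H.induce t).Colorable b) :
    ((G.join H).induce (s.disjSum t : Set (V ⊕ W))).Colorable (a + b) := by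
  obtain ⟨C⟩ := hs
  obtain ⟨D⟩ := ht
  let E : ((G.join H).induce (s.disjSum t : Set (V ⊕ W))).Coloring (Fin a ⊕ Fin b) :=
    Coloring.mk
      (fun | ⟨.inl v, hv⟩ => .inl (C ⟨v, Finset.inl_mem_disjSum.mp hv⟩)
           | ⟨.inr w, hw⟩ => .inr (D ⟨w, Finset.inr_mem_disjSum.mp hw⟩))
      (by
        rintro ⟨v | v, hv⟩ ⟨w | w, hw⟩ hvw
        · exact fun h => C.valid (G := G.induce s) hvw (Sum.inl_injective h)
        · exact Sum.inl_ne_inr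
        · exact Sum.inr_ne_inl
        · exact fun h => D.valid (G := H.induce t) hvw (Sum.inr_injective h))
  simpa using E.colorable

theorem Colorable.of_join_induce_image_inl {s : Set V} {c : ℕ}
    (h : ((G.join H).induce (Sum.inl '' s)).Colorable c) : (G.induce s).Colorable c :=
  h.of_hom (induceHom ⟨Sum.inl, id⟩ (Set.mapsTo_image _ _))

end SimpleGraph

theorem cliquesGraph_colorable (n m : ℕ) : (cliquesGraph n m).Colorable m :=
  ⟨Coloring.mk Prod.snd fun ⟨hfst, hne⟩ hsnd => hne (Prod.ext hfst hsnd)⟩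

theorem isClique_join_cliquesGraph_row {V : Type*} (G : SimpleGraph V) {n m : ℕ} (i : Fin n) :
    (G.join (cliquesGraph n m)).IsClique
      ((univ.map ((Function.Embedding.sectR i (Fin m)).trans .inr) :
        Finset (V ⊕ Fin n × Fin m)) : Set (V ⊕ Fin n × Fin m)) := by
  rintro _ hx _ hy hne
  simp only [coe_map, coe_univ, Set.image_univ, Set.mem_range] at hx hy
  obtain ⟨j, rfl⟩ := hx
  obtain ⟨j', rfl⟩ := hy
  exact ⟨rfl, fun h => hne (congrArg Sum.inr h)⟩

section JoinCliquesGraph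

variable {V : Type*} {G : SimpleGraph V} {n c : ℕ}

theorem colSet_join_cliquesGraph_disjSum_univ (hc : 2 ≤ c) {s : Finset V}
    (hs : (G.induce s).Colorable 2) :
    ColSet (G.join (cliquesGraph n (c - 2))) c (s.disjSum univ) := by
  have hcol := hs.join_induce_disjSum (t := univ)
    ((cliquesGraph_colorable n (c - 2)).of_hom (Embedding.induce _).toHom)
  rwa [show 2 + (c - 2) = c by omega] at hcol

theorem colorable_induce_of_colSet_join_cliquesGraph (hc : 2 ≤ c)
    {T : Finset (V ⊕ Fin n × Fin (c - 2))} (hT : ColSet (G.join (cliquesGraph n (c - 2))) c T)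
    {i : Fin n} (hi : ∀ j, (i, j) ∈ T.toRight) {A : Finset V} (hA : A ⊆ T.toLeft) :
    (G.induce A).Colorable 2 := by
  have hcol := Colorable.induce_of_forall_adj_isClique hT
    (isClique_join_cliquesGraph_row G i) (A := Sum.inl '' A)
    (by rintro _ hv; obtain ⟨j, -, rfl⟩ := mem_map.mp hv; exact mem_toRight.mp (hi j))
    (by rintro _ ⟨a, ha, rfl⟩; exact mem_toLeft.mp (hA ha))
    (by rintro _ ⟨a, -, rfl⟩ _ hv; obtain ⟨j, -, rfl⟩ := mem_map.mp hv; trivial)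
  rw [card_map, card_univ, Fintype.card_fin, show c - (c - 2) = 2 by omega] at hcol
  exact hcol.of_join_induce_image_inl

end JoinCliquesGraph

theorem oct_iff_large_colorable_set_in_join_general {V : Type*} [Fintype V] [DecidableEq V]
    (G : SimpleGraph V) (c : ℕ) (hc : 2 ≤ c) (k : ℕ)
    (hk : k < Fintype.card V) :
    (∃ S : Finset V, S.card = k ∧ (G.induce ((↑(Sᶜ) : Set V))).Colorable 2) ↔
    (∃ T : Finset (V ⊕ Fin (Fintype.card V) × Fin (c - 2)),
        T.card = Fintype.card (V ⊕ Fin (Fintype.card V) × Fin (c - 2)) - k ∧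
        ColSet (G.join (cliquesGraph (Fintype.card V) (c - 2))) c T) := by
  set n := Fintype.card V
  simp only [Fintype.card_sum, Fintype.card_prod, Fintype.card_fin]
  constructor
  · rintro ⟨S, rfl, hS⟩
    refine ⟨Sᶜ.disjSum univ, ?_, colSet_join_cliquesGraph_disjSum_univ hc hS⟩
    have := S.card_le_univ
    simp only [card_disjSum, card_compl, card_univ, Fintype.card_prod, Fintype.card_fin]
    omega
  · rintro ⟨T, hT, hTcol⟩
    have hsplit := T.card_toLeft_add_card_toRight
    have hleft : #T.toLeft ≤ n := card_le_univ _
    have hright : #T.toRight ≤ n * (c - 2) := by simpa using card_le_univ T.toRight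
    obtain ⟨i, hi⟩ :=
      T.toRight.exists_forall_mk_mem_of_card_lt (by simp only [Fintype.card_fin]; omega)
    obtain ⟨A, hAT, hA⟩ := exists_subset_card_eq (show n - k ≤ #T.toLeft by omega)
    refine ⟨Aᶜ, by rw [card_compl, hA]; omega, ?_⟩
    rw [compl_compl]
    exact colorable_induce_of_colSet_join_cliquesGraph hc hTcol hi hAT

theorem oct_iff_large_colorable_set_in_join {V : Type*} [Fintype V] [DecidableEq V]
    (G : SimpleGraph V) (hG : IsPerfect G) (c : ℕ) (hc : 2 ≤ c) (k : ℕ)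
    (hk : k < Fintype.card V) :
    (∃ S : Finset V, S.card = k ∧ (G.induce ((↑(Sᶜ) : Set V))).Colorable 2) ↔
    (∃ T : Finset (V ⊕ Fin (Fintype.card V) × Fin (c - 2)),
        T.card = Fintype.card (V ⊕ Fin (Fintype.card V) × Fin (c - 2)) - k ∧
        ColSet (G.join (cliquesGraph (Fintype.card V) (c - 2))) c T) :=
  oct_iff_large_colorable_set_in_join_general G c hc k hk
end

section
/- Let G be a graph and let H be the split graph with clique part V(G) and independent part E(G), where v ∈ V(G) is adjacent to e ∈ E(G) in H if and only if v is not an endpoint of e. Then for every independent set I of size |V(G)| − c in G, the set φ(I) = V(H) \ I is a c-colorable set of size |E(G)| + c in H. -/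
open Finset

/-- The split graph associated with `G`: its clique part is `V(G)`, its independent
part is `E(G)`, and a vertex is adjacent to an edge iff it is not an endpoint. -/
def splitOf {V : Type*} (G : SimpleGraph V) : SimpleGraph (V ⊕ G.edgeSet) where
  Adj x y :=
    match x, y with
    | .inl u, .inl v => u ≠ v
    | .inl u, .inr e => u ∉ (e : Sym2 V)
    | .inr e, .inl u => u ∉ (e : Sym2 V)
    | .inr _, .inr _ => False
  symm := by
    constructor
    rintro (u | e) (v | f) h
    · exact h.symm
    · exact h
    · exact h
    · exact h.elim
  loopless := by
    constructor
    rintro (u | e) h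
    · exact h rfl
    · exact h

/-! Colour each clique vertex `v ∉ I` by itself and each edge by one of its endpoints outside `I`,
which exists because `I` is independent. An edge is not adjacent to its own endpoints in the
split graph, so this is a proper colouring of `φ(I)` with the `c` colours `V(G) \ I`. -/

theorem SimpleGraph.exists_mem_notMem_of_mem_edgeSet {V : Type*} {G : SimpleGraph V} {s : Set V}
    (hs : ∀ u ∈ s, ∀ v ∈ s, ¬ G.Adj u v) {e : Sym2 V} (he : e ∈ G.edgeSet) :
    ∃ v ∈ e, v ∉ s := by
  induction e using Sym2.ind with
  | _ u v =>
    by_contra! hcover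
    exact hs u (hcover u (Sym2.mem_mk_left u v)) v (hcover v (Sym2.mem_mk_right u v)) he

theorem colSet_card_of_coloring {V α : Type*} {G : SimpleGraph V} (C : G.Coloring α)
    (S : Finset V) (T : Finset α) (hST : ∀ x ∈ S, C x ∈ T) : ColSet G T.card S := by
  have C' : (G.induce (S : Set V)).Coloring T :=
    .mk (fun x => ⟨C x, hST x x.2⟩) fun hadj heq => C.valid hadj (congrArg Subtype.val heq)
  simpa [ColSet] using C'.colorable

def splitOf.coloringOfEndpoint {V : Type*} {G : SimpleGraph V} (f : G.edgeSet → V)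
    (hf : ∀ e : G.edgeSet, f e ∈ (e : Sym2 V)) : (splitOf G).Coloring V :=
  .mk (Sum.elim id f) <| by
    rintro (u | e) (v | e') hadj
    · exact hadj
    · exact fun heq : u = f e' => hadj (heq ▸ hf e')
    · exact fun heq : f e = v => hadj (heq ▸ hf e)
    · exact hadj.elim

theorem phi_colorable {V : Type*} [Fintype V] [DecidableEq V] (G : SimpleGraph V)
    [DecidableRel G.Adj] (c : ℕ) (I : Finset V)
    (hindep : ∀ u ∈ I, ∀ v ∈ I, ¬ G.Adj u v)
    (hcard : I.card + c = Fintype.card V) :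
    ColSet (splitOf G) c (Finset.univ \ I.image (Sum.inl : V → V ⊕ G.edgeSet)) ∧
      (Finset.univ \ I.image (Sum.inl : V → V ⊕ G.edgeSet)).card = Fintype.card G.edgeSet + c := by
  have hcompl : Iᶜ.card = c := by rw [card_compl]; omega
  choose f hf hfI using fun e : G.edgeSet => G.exists_mem_notMem_of_mem_edgeSet hindep e.2
  refine ⟨hcompl ▸ colSet_card_of_coloring (splitOf.coloringOfEndpoint f hf) _ Iᶜ ?_, ?_⟩
  · rintro (v | e) hx
    · show v ∈ Iᶜ
      simpa using hx
    · show f e ∈ Iᶜ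
      simpa using hfI e
  · rw [card_univ_sdiff, card_image_of_injective _ Sum.inl_injective, Fintype.card_sum]
    omega
end

section
/- Let G be a graph and H the split graph with clique part V(G) and independent part E(G), where v ∈ V(G) is adjacent to e ∈ E(G) in H iff v is not an endpoint of e. If S is a c-colorable set of size |E(G)| + c in H, then E(G) ⊆ S and V(G) \ S is an independent set of size |V(G)| − c in G. -/
open Finset

/-!
The vertices of `S` in the clique part form a clique, so there are at most `c` of them; since
`|S| = |E(G)| + c`, there are exactly `c` and `S` contains all of `E(G)`. If an edge `uv` of `G`
had both endpoints outside `S`, it would be adjacent in the split graph to all `c` clique vertices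
of `S`, giving a clique of size `c + 1` inside `S`.
-/

theorem ColSet.card_le_of_isClique {V : Type*} {G : SimpleGraph V} {c : ℕ} {S T : Finset V}
    (hS : ColSet G c S) (hTS : T ⊆ S) (hT : G.IsClique (T : Set V)) : #T ≤ c := by
  classical
  have hclique : (G.induce (S : Set V)).IsClique ((T.subtype (· ∈ S) : Finset _) : Set _) := by
    rw [SimpleGraph.isClique_induce_iff]
    convert hT
    ext v
    simpa using fun hv => hTS hv
  calc #T = #(T.subtype (· ∈ S)) := by rw [card_subtype, filter_true_of_mem hTS]
    _ ≤ c := hclique.card_le_of_colorable hS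

section splitOf

variable {V : Type*} {G : SimpleGraph V}

theorem isClique_splitOf_image_inl (s : Set V) : (splitOf G).IsClique (Sum.inl '' s) := by
  rintro _ ⟨u, -, rfl⟩ _ ⟨v, -, rfl⟩ huv
  exact fun h => huv (congrArg Sum.inl h)

theorem isClique_splitOf_insert_inr {s : Set V} {e : G.edgeSet} (he : ∀ v ∈ s, v ∉ (e : Sym2 V)) :
    (splitOf G).IsClique (insert (Sum.inr e) (Sum.inl '' s)) := by
  refine (isClique_splitOf_image_inl s).insert ?_
  rintro _ ⟨v, hv, rfl⟩ -
  exact he v hv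

end splitOf

theorem colorable_set_gives_independent_set {V : Type*} [Fintype V] [DecidableEq V]
    (G : SimpleGraph V) [DecidableRel G.Adj] (c : ℕ)
    (S : Finset (V ⊕ G.edgeSet)) (hS : ColSet (splitOf G) c S)
    (hcard : S.card = Fintype.card G.edgeSet + c) :
    (∀ e : G.edgeSet, Sum.inr e ∈ S) ∧
    (∀ u ∈ Finset.univ.filter (fun v : V => Sum.inl v ∉ S),
      ∀ v ∈ Finset.univ.filter (fun v : V => Sum.inl v ∉ S), ¬ G.Adj u v) ∧
    (Finset.univ.filter (fun v : V => Sum.inl v ∉ S)).card + c = Fintype.card V := by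
  have hinl_subset : S.toLeft.map .inl ⊆ S := map_inl_subset_iff_subset_toLeft.2 subset_rfl
  have hleft_le : #S.toLeft ≤ c := by
    simpa using hS.card_le_of_isClique hinl_subset (by simpa using isClique_splitOf_image_inl _)
  have hsplit := card_toLeft_add_card_toRight (u := S)
  have hright_le : #S.toRight ≤ Fintype.card G.edgeSet := card_le_univ _
  have hright : S.toRight = univ := eq_univ_of_card _ (by omega)
  have hleft : #S.toLeft = c := by omega
  have houtside : univ.filter (fun v : V => Sum.inl v ∉ S) = S.toLeftᶜ := by ext; simp
  refine ⟨fun e => mem_toRight.1 (hright ▸ mem_univ e), ?_, ?_⟩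
  · rw [houtside]
    intro u hu v hv huv
    have hmem : Sum.inr ⟨s(u, v), huv⟩ ∈ S := mem_toRight.1 (hright ▸ mem_univ _)
    have hbig := hS.card_le_of_isClique
      (T := cons (Sum.inr ⟨s(u, v), huv⟩) (S.toLeft.map .inl) (by simp))
      (cons_subset.2 ⟨hmem, hinl_subset⟩) <| by
        simpa using isClique_splitOf_insert_inr (s := (S.toLeft : Set V)) <| by
          intro w hw hwe
          rcases Sym2.mem_iff.1 hwe with rfl | rfl <;> simp_all
    simp only [card_cons, card_map] at hbig
    omega
  · rw [houtside, card_compl]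
    have := card_le_univ S.toLeft
    omega
end

section
/- Let G be a graph with vertices s, t at distance ℓ, and for 0 ≤ i ≤ ℓ let D_i be the set of vertices at distance i from s and distance ℓ − i from t. Define H' on vertex set (⋃ D_i) ∪ (⋃ C_i) where each C_i is a new clique of c−1 vertices: each D_i is a clique, u ∈ D_i and v ∈ D_{i+1} are adjacent iff they are non-adjacent in G, and every vertex of C_i is adjacent to all of D_i ∪ D_{i+1} (D_{ℓ+1} = ∅). Then H' is a co-comparability graph. -/
open Finset

/-- `G` is a co-comparability graph: there is a linear order on the vertices such
that whenever `u ≺ v ≺ w` and `u,w` are adjacent, `u,v` or `v,w` are adjacent. -/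
def IsCoComparability {W : Type*} (G : SimpleGraph W) : Prop :=
  ∃ r : W → W → Prop, IsStrictTotalOrder W r ∧
    ∀ u v w, r u v → r v w → G.Adj u w → G.Adj u v ∨ G.Adj v w

/-- The graph `H'` of the shortest-path reduction.  Its vertices are the vertices of
`G` lying on shortest `s`–`t` paths (the levels `D_i`) together with cliques `C_i`
(`i ≤ ℓ`) of `c - 1` new vertices each.  Each `D_i` is a clique; `u ∈ D_i` and
`v ∈ D_{i+1}` are adjacent iff non-adjacent in `G`; `C_i` is completely joined to
`D_i ∪ D_{i+1}`. -/
def spGraph {V : Type*} (G : SimpleGraph V) (s t : V) (ℓ c : ℕ) :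
    SimpleGraph ({v : V // G.dist s v + G.dist v t = ℓ} ⊕ Fin (ℓ + 1) × Fin (c - 1)) where
  Adj x y :=
    match x, y with
    | .inl u, .inl v =>
        (G.dist s u.1 = G.dist s v.1 ∧ u ≠ v) ∨
        (G.dist s v.1 = G.dist s u.1 + 1 ∧ ¬ G.Adj u.1 v.1) ∨
        (G.dist s u.1 = G.dist s v.1 + 1 ∧ ¬ G.Adj u.1 v.1)
    | .inl u, .inr p => G.dist s u.1 = (p.1 : ℕ) ∨ G.dist s u.1 = (p.1 : ℕ) + 1
    | .inr p, .inl u => G.dist s u.1 = (p.1 : ℕ) ∨ G.dist s u.1 = (p.1 : ℕ) + 1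
    | .inr p, .inr q => p.1 = q.1 ∧ p ≠ q
  symm := by
    constructor
    rintro (u | p) (v | q) h
    · rcases h with ⟨h1, h2⟩ | ⟨h1, h2⟩ | ⟨h1, h2⟩
      · exact Or.inl ⟨h1.symm, h2.symm⟩
      · exact Or.inr (Or.inr ⟨h1, fun a => h2 a.symm⟩)
      · exact Or.inr (Or.inl ⟨h1, fun a => h2 a.symm⟩)
    · exact h
    · exact h
    · exact ⟨h.1.symm, h.2.symm⟩
  loopless := by
    constructor
    rintro (u | p) h
    · rcases h with ⟨_, h2⟩ | ⟨h1, _⟩ | ⟨h1, _⟩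
      · exact h2 rfl
      · omega
      · omega
    · exact h.2 rfl

/-! Order the vertices of `H'` by level, putting `D_i` at level `2 i` and `C_i` at level `2 i + 1`,
and break ties arbitrarily. Every level is a clique, and an edge of `H'` spans at most two levels,
so a vertex strictly between its ends lies exactly one level above the lower end; one checks
directly that consecutive levels are completely joined in `H'`. -/

theorem isCoComparability_of_level {W α : Type*} [LinearOrder α] (G : SimpleGraph W) (L : W → α)
    (adj_of_level_eq : ∀ x y, L x = L y → x ≠ y → G.Adj x y)
    (adj_of_level_between : ∀ u v w, L u < L v → L v < L w → G.Adj u w →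
      G.Adj u v ∨ G.Adj v w) :
    IsCoComparability G := by
  let _ : LinearOrder W := IsWellOrder.linearOrder WellOrderingRel
  let f : W ↪ α ×ₗ W := ⟨fun x => toLex (L x, x), fun x y h => congrArg (fun p => (ofLex p).2) h⟩
  have level_le {x y : W} (h : f x < f y) : L x ≤ L y := Prod.Lex.monotone_fst _ _ h.le
  refine ⟨f ⁻¹'o (· < ·), (RelEmbedding.preimage f _).isStrictTotalOrder,
    fun u v w huv hvw huw => ?_⟩
  rcases (level_le huv).eq_or_lt with huv' | huv'
  · exact Or.inl (adj_of_level_eq u v huv' fun h => huv.ne (congrArg f h))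
  rcases (level_le hvw).eq_or_lt with hvw' | hvw'
  · exact Or.inr (adj_of_level_eq v w hvw' fun h => hvw.ne (congrArg f h))
  exact adj_of_level_between u v w huv' hvw' huw

section spGraph

variable {V : Type*} (G : SimpleGraph V) (s t : V) (ℓ c : ℕ)

noncomputable def spLevel :
    {v : V // G.dist s v + G.dist v t = ℓ} ⊕ Fin (ℓ + 1) × Fin (c - 1) → ℕ
  | .inl u => 2 * G.dist s u.1
  | .inr p => 2 * p.1 + 1

variable {G s t ℓ c}

theorem spGraph_adj_of_spLevel_eq {x y} (h : spLevel G s t ℓ c x = spLevel G s t ℓ c y)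
    (hne : x ≠ y) : (spGraph G s t ℓ c).Adj x y := by
  rcases x with a | p <;> rcases y with b | q <;> simp only [spLevel] at h
  · exact Or.inl ⟨by omega, fun hab => hne (congrArg _ hab)⟩
  · omega
  · omega
  · exact ⟨Fin.ext (by omega), fun hpq => hne (congrArg _ hpq)⟩

theorem spGraph_adj_of_spLevel_eq_succ {x y}
    (h : spLevel G s t ℓ c y = spLevel G s t ℓ c x + 1) : (spGraph G s t ℓ c).Adj x y := by
  rcases x with a | p <;> rcases y with b | q <;> simp only [spLevel] at h
  · omega
  · exact Or.inl (by omega)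
  · exact Or.inr (by omega)
  · omega

theorem spLevel_le_add_two_of_adj {x y} (hadj : (spGraph G s t ℓ c).Adj x y) :
    spLevel G s t ℓ c y ≤ spLevel G s t ℓ c x + 2 := by
  rcases x with a | p <;> rcases y with b | q <;> simp only [spLevel]
  · rcases hadj with ⟨h, _⟩ | ⟨h, _⟩ | ⟨h, _⟩ <;> omega
  · rcases hadj with h | h <;> omega
  · rcases hadj with h | h <;> omega
  · have : p.1 = q.1 := hadj.1
    omega

end spGraph

theorem spGraph_isCoComparability_general {V : Type*} (G : SimpleGraph V) (s t : V)
    (ℓ c : ℕ) :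
    IsCoComparability (spGraph G s t ℓ c) := by
  refine isCoComparability_of_level _ (spLevel G s t ℓ c)
    (fun _ _ => spGraph_adj_of_spLevel_eq) fun u v w huv hvw huw => ?_
  have := spLevel_le_add_two_of_adj huw
  exact Or.inl (spGraph_adj_of_spLevel_eq_succ (by omega))

theorem spGraph_isCoComparability {V : Type*} (G : SimpleGraph V) (s t : V)
    (ℓ c : ℕ) (hreach : G.Reachable s t) (hdist : G.dist s t = ℓ) :
    IsCoComparability (spGraph G s t ℓ c) :=
  spGraph_isCoComparability_general G s t ℓ c
end
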